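/- Let J be a bounded self-adjoint Jacobi matrix on ℓ²(ℤ) with coefficients (a, b), let S be the shift, and for n ∈ ℕ let (Jⁿ)_+ denote the strictly upper triangular part of Jⁿ (in the standard basis). Then (Jⁿ)_+ = Σ_{k=0}^{n-1} a ((Jᵏ)_d S - (S Jᵏ)_d) J^{n-k-1}, where X_d denotes the diagonal part of X (the multiplication operator by the sequence X_{mm}) and a denotes multiplication by the sequence a. -/

import Mathlib

/-! Multiplying an operator `X` by `J` on the right acts on its matrix by the three-term
recurrence `(XJ)_{jk} = a_{k-1} X_{j,k-1} + a_k X_{j,k+1} + b_k X_{jk}`. Hence `(XJ)_+` and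
`X_+ J` differ only at the entries `(j, j+1)`, by `a_j X_{jj}`, and `(j, j)`, by
`-a_j X_{j,j+1}`. When the matrix of `X` is symmetric, as it is for every power of `J`, the
latter equals `-a_j (SX)_{jj}`, so `(XJ)_+ = X_+ J + a (X_d S - (SX)_d)`. Unrolling this
recursion for `X = Jⁿ`, starting from `(J⁰)_+ = 0`, gives the formula. -/

noncomputable section

/-- ℓ²(ℤ) -/
abbrev H2 : Type := lp (fun _ : ℤ => ℂ) 2

/-- the standard unit vectors δ_n -/
noncomputable def delta (n : ℤ) : H2 := lp.single 2 n 1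

/-- matrix entries X_{jk} = ⟨δ_j, X δ_k⟩ -/
noncomputable def ent (X : H2 →L[ℂ] H2) (j k : ℤ) : ℂ := inner ℂ (delta j) (X (delta k))

open ContinuousLinearMap Finset

open ComplexConjugate

def IsShift (S : H2 →L[ℂ] H2) : Prop :=
  ∀ j k : ℤ, ent S j k = if k = j + 1 then 1 else 0

def IsDiagonal (D : H2 →L[ℂ] H2) (d : ℤ → ℂ) : Prop :=
  ∀ j k : ℤ, ent D j k = if j = k then d j else 0

def IsDiagonalPart (D X : H2 →L[ℂ] H2) : Prop :=
  IsDiagonal D fun j => ent X j j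

def IsStrictUpperPart (U X : H2 →L[ℂ] H2) : Prop :=
  ∀ j k : ℤ, ent U j k = if j < k then ent X j k else 0

def HasSymmetricMatrix (X : H2 →L[ℂ] H2) : Prop :=
  ∀ j k : ℤ, ent X j k = ent X k j

theorem inner_delta_left (j : ℤ) (f : H2) : inner ℂ (delta j) f = f j := by
  simp [delta, lp.inner_single_left]

theorem delta_apply (n m : ℤ) : delta n m = if m = n then 1 else 0 := by
  simp [delta, lp.single_apply, Pi.single_apply]

theorem apply_delta (X : H2 →L[ℂ] H2) (j k : ℤ) : X (delta k) j = ent X j k :=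
  (inner_delta_left j _).symm

theorem apply_delta_eq {X : H2 →L[ℂ] H2} {k : ℤ} {g : H2} (h : ∀ j, ent X j k = g j) :
    X (delta k) = g :=
  lp.ext <| funext fun j => by rw [apply_delta, h]

theorem ext_ent {X Y : H2 →L[ℂ] H2} (h : ∀ j k, ent X j k = ent Y j k) : X = Y :=
  lp.ext_continuousLinearMap (by norm_num) fun k =>
    ContinuousLinearMap.ext_ring <| apply_delta_eq fun j => (h j k).trans (apply_delta Y j k).symm

theorem isDiagonal_one : IsDiagonal 1 fun _ => 1 := by
  intro j k
  rw [ent, one_apply_eq_self, inner_delta_left, delta_apply]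

theorem ent_zero (j k : ℤ) : ent (0 : H2 →L[ℂ] H2) j k = 0 := by
  simp [ent]

theorem ent_add (X Y : H2 →L[ℂ] H2) (j k : ℤ) : ent (X + Y) j k = ent X j k + ent Y j k := by
  simp [ent]

theorem ent_sub (X Y : H2 →L[ℂ] H2) (j k : ℤ) : ent (X - Y) j k = ent X j k - ent Y j k := by
  simp [ent]

theorem ent_adjoint (X : H2 →L[ℂ] H2) (j k : ℤ) : ent (adjoint X) j k = conj (ent X k j) := by
  rw [ent, ent, adjoint_inner_right, inner_conj_symm]

theorem ent_mul_of_apply_delta {Y : H2 →L[ℂ] H2} {k m : ℤ} {c : ℂ}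
    (h : Y (delta k) = c • delta m) (X : H2 →L[ℂ] H2) (j : ℤ) :
    ent (X * Y) j k = c * ent X j m := by
  rw [ent, mul_apply_eq_comp, h, map_smul, inner_smul_right, ent]

theorem ent_mul_of_adjoint_apply_delta {X : H2 →L[ℂ] H2} {j i : ℤ} {c : ℂ}
    (h : adjoint X (delta j) = c • delta i) (Y : H2 →L[ℂ] H2) (k : ℤ) :
    ent (X * Y) j k = conj c * ent Y i k := by
  rw [ent, mul_apply_eq_comp, ← adjoint_inner_left, h, inner_smul_left, ent]

namespace IsDiagonal

variable {D : H2 →L[ℂ] H2} {d : ℤ → ℂ}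

theorem apply_delta (hD : IsDiagonal D d) (k : ℤ) : D (delta k) = d k • delta k :=
  apply_delta_eq fun j => by
    rw [hD, lp.coeFn_smul, Pi.smul_apply, delta_apply, smul_eq_mul]
    split_ifs with h <;> simp [h]

theorem adjoint (hD : IsDiagonal D d) : IsDiagonal (adjoint D) fun j => conj (d j) := by
  intro j k
  rw [ent_adjoint, hD]
  split_ifs with h h' h' <;> simp_all [eq_comm]

theorem ent_mul_diag (hD : IsDiagonal D d) (X : H2 →L[ℂ] H2) (j k : ℤ) :
    ent (X * D) j k = d k * ent X j k :=
  ent_mul_of_apply_delta (hD.apply_delta k) X j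

theorem ent_diag_mul (hD : IsDiagonal D d) (X : H2 →L[ℂ] H2) (j k : ℤ) :
    ent (D * X) j k = d j * ent X j k := by
  rw [ent_mul_of_adjoint_apply_delta (hD.adjoint.apply_delta j), Complex.conj_conj]

theorem hasSymmetricMatrix (hD : IsDiagonal D d) : HasSymmetricMatrix D := by
  intro j k
  rw [hD, hD]
  split_ifs <;> simp_all

end IsDiagonal

theorem IsStrictUpperPart.eq_zero_of_isDiagonal {U D : H2 →L[ℂ] H2} {d : ℤ → ℂ}
    (hU : IsStrictUpperPart U D) (hD : IsDiagonal D d) : U = 0 :=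
  ext_ent fun j k => by
    rw [hU, hD, ent_zero]
    split_ifs <;> first | rfl | omega

namespace IsShift

variable {S : H2 →L[ℂ] H2}

theorem apply_delta (hS : IsShift S) (k : ℤ) : S (delta k) = delta (k - 1) :=
  apply_delta_eq fun j => by
    rw [hS, delta_apply]
    exact if_congr (by omega) rfl rfl

theorem adjoint_apply_delta (hS : IsShift S) (k : ℤ) : adjoint S (delta k) = delta (k + 1) :=
  apply_delta_eq fun j => by
    rw [ent_adjoint, hS, delta_apply]
    split_ifs <;> simp

theorem ent_mul_shift (hS : IsShift S) (X : H2 →L[ℂ] H2) (j k : ℤ) :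
    ent (X * S) j k = ent X j (k - 1) := by
  rw [ent_mul_of_apply_delta (by rw [one_smul]; exact hS.apply_delta k), one_mul]

theorem ent_mul_adjoint (hS : IsShift S) (X : H2 →L[ℂ] H2) (j k : ℤ) :
    ent (X * adjoint S) j k = ent X j (k + 1) := by
  rw [ent_mul_of_apply_delta (by rw [one_smul]; exact hS.adjoint_apply_delta k), one_mul]

theorem ent_shift_mul (hS : IsShift S) (X : H2 →L[ℂ] H2) (j k : ℤ) :
    ent (S * X) j k = ent X (j + 1) k := by
  rw [ent_mul_of_adjoint_apply_delta (by rw [one_smul]; exact hS.adjoint_apply_delta j), map_one,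
    one_mul]

theorem ent_adjoint_mul (hS : IsShift S) (X : H2 →L[ℂ] H2) (j k : ℤ) :
    ent (adjoint S * X) j k = ent X (j - 1) k := by
  rw [ent_mul_of_adjoint_apply_delta (by rw [adjoint_adjoint, one_smul]; exact hS.apply_delta j),
    map_one, one_mul]

end IsShift

section Jacobi

variable {a b : ℤ → ℂ} {S A Mb J : H2 →L[ℂ] H2}

theorem ent_mul_jacobi (hS : IsShift S) (hA : IsDiagonal A a) (hMb : IsDiagonal Mb b)
    (hJ : J = A * S + adjoint S * A + Mb) (X : H2 →L[ℂ] H2) (j k : ℤ) :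
    ent (X * J) j k = a (k - 1) * ent X j (k - 1) + a k * ent X j (k + 1) + b k * ent X j k := by
  rw [hJ, mul_add, mul_add, ← mul_assoc, ← mul_assoc, ent_add, ent_add, hS.ent_mul_shift,
    hA.ent_mul_diag, hA.ent_mul_diag, hS.ent_mul_adjoint, hMb.ent_mul_diag]

theorem ent_jacobi_mul (hS : IsShift S) (hA : IsDiagonal A a) (hMb : IsDiagonal Mb b)
    (hJ : J = A * S + adjoint S * A + Mb) (X : H2 →L[ℂ] H2) (j k : ℤ) :
    ent (J * X) j k = a j * ent X (j + 1) k + a (j - 1) * ent X (j - 1) k + b j * ent X j k := by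
  rw [hJ, add_mul, add_mul, mul_assoc, mul_assoc, ent_add, ent_add, hA.ent_diag_mul,
    hS.ent_shift_mul, hS.ent_adjoint_mul, hA.ent_diag_mul, hMb.ent_diag_mul]

theorem hasSymmetricMatrix_jacobi_pow (hS : IsShift S) (hA : IsDiagonal A a)
    (hMb : IsDiagonal Mb b) (hJ : J = A * S + adjoint S * A + Mb) (n : ℕ) :
    HasSymmetricMatrix (J ^ n) := by
  induction n with
  | zero => exact pow_zero J ▸ isDiagonal_one.hasSymmetricMatrix
  | succ n ih =>
    intro j k
    rw [pow_succ, ent_mul_jacobi hS hA hMb hJ, pow_mul_comm', ent_jacobi_mul hS hA hMb hJ,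
      ih j (k - 1), ih j (k + 1), ih j k]
    ring

theorem strictUpperPart_mul_jacobi (hS : IsShift S) (hA : IsDiagonal A a)
    (hMb : IsDiagonal Mb b) (hJ : J = A * S + adjoint S * A + Mb) {X U V D E : H2 →L[ℂ] H2}
    (hX : HasSymmetricMatrix X) (hU : IsStrictUpperPart U X) (hV : IsStrictUpperPart V (X * J))
    (hD : IsDiagonalPart D X) (hE : IsDiagonalPart E (S * X)) :
    V = U * J + A * (D * S - E) := by
  refine ext_ent fun j k => ?_
  rw [hV, ent_mul_jacobi hS hA hMb hJ, ent_add, ent_mul_jacobi hS hA hMb hJ, hU, hU, hU,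
    hA.ent_diag_mul, ent_sub, hS.ent_mul_shift, hD, hE]
  dsimp only
  rw [hS.ent_shift_mul]
  rcases lt_trichotomy j k with hjk | rfl | hjk
  · rw [if_pos hjk, if_pos hjk, if_pos (by omega : j < k + 1), if_neg hjk.ne]
    obtain rfl | hjk' := (Int.add_one_le_iff.mpr hjk).eq_or_lt
    · rw [add_sub_cancel_right, if_neg (lt_irrefl j), if_pos rfl]
      ring
    · rw [if_pos (by omega : j < k - 1), if_neg (by omega : j ≠ k - 1)]
      ring
  · rw [if_neg (lt_irrefl j), if_neg (lt_irrefl j), if_neg (by omega : ¬j < j - 1),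
      if_pos (by omega : j < j + 1), if_neg (by omega : j ≠ j - 1), if_pos rfl, hX j (j + 1)]
    ring
  · rw [if_neg hjk.not_gt, if_neg hjk.not_gt, if_neg (by omega : ¬j < k - 1),
      if_neg (by omega : ¬j < k + 1), if_neg (by omega : j ≠ k - 1), if_neg hjk.ne']
    ring

end Jacobi

theorem eq_sum_mul_pow_of_succ {R : Type*} [Semiring R] {u c : ℕ → R} {x : R} (h0 : u 0 = 0)
    (hsucc : ∀ n, u (n + 1) = u n * x + c n) (n : ℕ) :
    u n = ∑ k ∈ range n, c k * x ^ (n - k - 1) := by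
  induction n with
  | zero => rw [h0, range_zero, sum_empty]
  | succ n ih =>
    rw [hsucc, ih, sum_range_succ, sum_mul, show n + 1 - n - 1 = 0 by omega, pow_zero, mul_one]
    congr 1
    refine sum_congr rfl fun k hk => ?_
    rw [mul_assoc, ← pow_succ, show n + 1 - k - 1 = n - k - 1 + 1 by grind]

theorem stmt10_general (a b : ℤ → ℝ)
    (S A Mb J : H2 →L[ℂ] H2)
    (hS : ∀ j k : ℤ, ent S j k = if k = j + 1 then 1 else 0)
    (hA : ∀ j k : ℤ, ent A j k = if j = k then (a j : ℂ) else 0)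
    (hMb : ∀ j k : ℤ, ent Mb j k = if j = k then (b j : ℂ) else 0)
    (hJ : J = A * S + ContinuousLinearMap.adjoint S * A + Mb)
    (Up Dd SJd : ℕ → (H2 →L[ℂ] H2))
    (hUp : ∀ (n : ℕ) (j k : ℤ), ent (Up n) j k = if j < k then ent (J ^ n) j k else 0)
    (hDd : ∀ (n : ℕ) (j k : ℤ), ent (Dd n) j k = if j = k then ent (J ^ n) j j else 0)
    (hSJd : ∀ (n : ℕ) (j k : ℤ),
      ent (SJd n) j k = if j = k then ent (S * J ^ n) j j else 0) :
    ∀ n : ℕ, Up n = ∑ k ∈ Finset.range n, A * (Dd k * S - SJd k) * J ^ (n - k - 1) := by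
  have hA' : IsDiagonal A fun j => (a j : ℂ) := hA
  have hMb' : IsDiagonal Mb fun j => (b j : ℂ) := hMb
  have hUp0 : Up 0 = 0 :=
    IsStrictUpperPart.eq_zero_of_isDiagonal (hUp 0) (pow_zero J ▸ isDiagonal_one)
  refine eq_sum_mul_pow_of_succ hUp0 fun n => ?_
  exact strictUpperPart_mul_jacobi hS hA' hMb' hJ (hasSymmetricMatrix_jacobi_pow hS hA' hMb' hJ n)
    (hUp n) (pow_succ J n ▸ hUp (n + 1)) (hDd n) (hSJd n)

/-- For a Jacobi matrix `J = aS + S*a + b` (with `S` the shift and `a`, `b`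
multiplication operators), the strictly upper triangular part of `Jⁿ` satisfies
`(Jⁿ)₊ = Σ_{k=0}^{n-1} a ((Jᵏ)_d S - (S Jᵏ)_d) J^{n-k-1}`. -/
theorem stmt10 (a b : ℤ → ℝ) (ha : ∀ n, 0 < a n)
    (S A Mb J : H2 →L[ℂ] H2)
    (hS : ∀ j k : ℤ, ent S j k = if k = j + 1 then 1 else 0)
    (hA : ∀ j k : ℤ, ent A j k = if j = k then (a j : ℂ) else 0)
    (hMb : ∀ j k : ℤ, ent Mb j k = if j = k then (b j : ℂ) else 0)
    (hJ : J = A * S + ContinuousLinearMap.adjoint S * A + Mb)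
    (Up Dd SJd : ℕ → (H2 →L[ℂ] H2))
    (hUp : ∀ (n : ℕ) (j k : ℤ), ent (Up n) j k = if j < k then ent (J ^ n) j k else 0)
    (hDd : ∀ (n : ℕ) (j k : ℤ), ent (Dd n) j k = if j = k then ent (J ^ n) j j else 0)
    (hSJd : ∀ (n : ℕ) (j k : ℤ),
      ent (SJd n) j k = if j = k then ent (S * J ^ n) j j else 0) :
    ∀ n : ℕ, Up n = ∑ k ∈ Finset.range n, A * (Dd k * S - SJd k) * J ^ (n - k - 1) :=
  stmt10_general a b S A Mb J hS hA hMb hJ Up Dd SJd hUp hDd hSJd
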